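/- Let μ_d denote the standard Gaussian measure on ℝ^d and σ(t) = max(t, 0) the ReLU function. For every v, x ∈ ℝ^d, ∫_{ℝ^d} 2 (wᵀv) σ(wᵀx) dμ_d(w) = vᵀx. -/

import Mathlib

/-!
Since `2 max(t, 0) = t + |t|`, the integrand splits as `⟨w, v⟩⟨w, x⟩ + ⟨w, v⟩|⟨w, x⟩|`. The second
term is odd in `w`, so it integrates to zero against the symmetric measure `μ_d`; the first
integrates to `vᵀ Σ x` with `Σ = I` the covariance of `μ_d`, because the coordinates are
independent, centred and of unit variance.
-/

open MeasureTheory ProbabilityTheory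

instance isNegInvariant_gaussianReal_zero (v : NNReal) : (gaussianReal 0 v).IsNegInvariant :=
  ⟨by simpa [Measure.neg_def] using gaussianReal_map_neg (μ := 0) (v := v)⟩

lemma integral_sq_gaussianReal_zero (v : NNReal) : ∫ x, x ^ 2 ∂gaussianReal 0 v = v := by
  rw [← variance_of_integral_eq_zero aemeasurable_id' integral_id_gaussianReal,
    variance_fun_id_gaussianReal]

section Odd

variable {E : Type*} [AddGroup E] [MeasurableSpace E] [MeasurableNeg E]
  {μ : Measure E} [μ.IsNegInvariant]

lemma integral_eq_zero_of_odd {f : E → ℝ} (hf : ∀ w, f (-w) = -f w) : ∫ w, f w ∂μ = 0 := by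
  have h := integral_neg_eq_self f μ
  simp only [hf, integral_neg] at h
  linarith

lemma integral_two_mul_mul_max_zero_of_odd {f g : E → ℝ} (hf : ∀ w, f (-w) = -f w)
    (hg : ∀ w, g (-w) = -g w) (hfm : AEStronglyMeasurable f μ) (hgm : AEStronglyMeasurable g μ)
    (hfg : Integrable (fun w => f w * g w) μ) :
    ∫ w, 2 * f w * max (g w) 0 ∂μ = ∫ w, f w * g w ∂μ := by
  have habs : Integrable (fun w => f w * |g w|) μ :=
    hfg.mono (hfm.mul hgm.norm) (ae_of_all _ fun w => by simp)
  have hsplit (w : E) : 2 * f w * max (g w) 0 = f w * g w + f w * |g w| := by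
    rcases le_total 0 (g w) with h | h
    · rw [max_eq_left h, abs_of_nonneg h]; ring
    · rw [max_eq_right h, abs_of_nonpos h]; ring
  simp_rw [hsplit]
  rw [integral_add hfg habs,
    integral_eq_zero_of_odd (f := fun w => f w * |g w|) (fun w => by rw [hf, hg, abs_neg, neg_mul]),
    add_zero]

end Odd

section Pi

variable {ι : Type*} [Fintype ι] {μ : Measure ℝ} [IsProbabilityMeasure μ]

lemma memLp_sum_eval_mul_pi (hμ : MemLp id 2 μ) (v : ι → ℝ) :
    MemLp (fun w => ∑ i, w i * v i) 2 (Measure.pi fun _ => μ) :=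
  memLp_finsetSum _ fun i _ =>
    (hμ.comp_measurePreserving (measurePreserving_eval _ i)).mul_const (v i)

lemma integral_eval_mul_eval_pi [DecidableEq ι] (i j : ι) :
    ∫ w, w i * w j ∂Measure.pi (fun _ => μ) = if i = j then ∫ x, x ^ 2 ∂μ else (∫ x, x ∂μ) ^ 2 := by
  split_ifs with hij
  · subst hij
    simp_rw [← sq]
    exact integral_comp_eval (μ := fun _ => μ) (continuous_pow (M := ℝ) 2).aestronglyMeasurable
  · have hind :=
      (iIndepFun_pi (μ := fun _ => μ) (X := fun _ => id) fun _ => aemeasurable_id).indepFun hij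
    calc ∫ w, w i * w j ∂Measure.pi (fun _ => μ)
        = (∫ w, w i ∂Measure.pi (fun _ => μ)) * ∫ w, w j ∂Measure.pi (fun _ => μ) :=
          hind.integral_mul_eq_mul_integral (measurable_pi_apply i).aestronglyMeasurable
            (measurable_pi_apply j).aestronglyMeasurable
      _ = (∫ x, x ∂μ) ^ 2 := by rw [integral_eval, integral_eval, sq]

lemma integral_sum_eval_mul_sum_eval_pi (hμ : MemLp id 2 μ) (hmean : ∫ x, x ∂μ = 0)
    (hsq : ∫ x, x ^ 2 ∂μ = 1) (v x : ι → ℝ) :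
    ∫ w, (∑ i, w i * v i) * (∑ i, w i * x i) ∂Measure.pi (fun _ => μ) = ∑ i, v i * x i := by
  classical
  have hint (i j : ι) :
      Integrable (fun w : ι → ℝ => v i * x j * (w i * w j)) (Measure.pi fun _ => μ) :=
    ((hμ.comp_measurePreserving (measurePreserving_eval _ i)).integrable_mul
      (hμ.comp_measurePreserving (measurePreserving_eval _ j))).const_mul _
  simp_rw [Finset.sum_mul_sum, fun (w : ι → ℝ) i j =>
    show w i * v i * (w j * x j) = v i * x j * (w i * w j) by ring]
  rw [integral_finsetSum _ fun i _ => integrable_finsetSum _ fun j _ => hint i j]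
  simp_rw [integral_finsetSum _ fun j _ => hint _ j, integral_const_mul, integral_eval_mul_eval_pi,
    hmean, hsq]
  simp

end Pi

/-- For the standard Gaussian measure on ℝ^d and ReLU σ(t)=max(t,0):
    ∫ 2(wᵀv)σ(wᵀx) dμ_d(w) = vᵀx. -/
theorem stmt_0 (d : ℕ) (v x : Fin d → ℝ) :
    ∫ w : Fin d → ℝ, 2 * (∑ i, w i * v i) * max (∑ i, w i * x i) 0
      ∂(Measure.pi fun _ : Fin d => gaussianReal 0 1)
    = ∑ i, v i * x i := by
  have hμ : MemLp id 2 (gaussianReal 0 1) := memLp_id_gaussianReal 2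
  have hv := memLp_sum_eval_mul_pi (ι := Fin d) hμ v
  have hx := memLp_sum_eval_mul_pi (ι := Fin d) hμ x
  have hodd (u w : Fin d → ℝ) : ∑ i, (-w) i * u i = -∑ i, w i * u i := by
    simp [Finset.sum_neg_distrib]
  rw [integral_two_mul_mul_max_zero_of_odd (hodd v) (hodd x) hv.aestronglyMeasurable
      hx.aestronglyMeasurable (hv.integrable_mul hx),
    integral_sum_eval_mul_sum_eval_pi hμ integral_id_gaussianReal
      (by simpa using integral_sq_gaussianReal_zero 1)]
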